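/- Lipschitzness of the SPO+ loss in the prediction argument: let S ⊆ ℝ^d be a nonempty compact set with diameter D(S), fix c ∈ ℝ^d, and let w⋆ ∈ S be a minimizer of w ↦ ⟨c, w⟩ over S. Then for all ĉ₁, ĉ₂ ∈ ℝ^d, |ℓ_S(ĉ₁, c) − ℓ_S(ĉ₂, c)| ≤ 2 D(S) · ‖ĉ₁ − ĉ₂‖, where both losses are computed with the same minimizer w⋆. -/

import Mathlib

open scoped RealInnerProductSpace

/-- Support function of a set `S ⊆ ℝ^d`. -/
noncomputable def supp {d : ℕ} (S : Set (EuclideanSpace ℝ (Fin d)))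
    (u : EuclideanSpace ℝ (Fin d)) : ℝ :=
  sSup ((fun w => ⟪u, w⟫) '' S)

/-- Optimal value of the linear program over `S`. -/
noncomputable def zstar {d : ℕ} (S : Set (EuclideanSpace ℝ (Fin d)))
    (c : EuclideanSpace ℝ (Fin d)) : ℝ :=
  sInf ((fun w => ⟪c, w⟫) '' S)

/-- SPO+ loss with a chosen minimizer `w⋆` of `⟨c, ·⟩` over `S`. -/
noncomputable def spoPlus {d : ℕ} (S : Set (EuclideanSpace ℝ (Fin d)))
    (chat c wstar : EuclideanSpace ℝ (Fin d)) : ℝ :=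
  supp S (c - (2 : ℝ) • chat) + 2 * ⟪chat, wstar⟫ - zstar S c

/-!
A maximizer `w₁ ∈ S` of `⟪c - 2 • ĉ₁, ·⟫` computes `ξ_S(c - 2 ĉ₁)` and is a lower bound
for `ξ_S(c - 2 ĉ₂)`; since `z⋆_S(c)` cancels, `ℓ_S(ĉ₁, c) - ℓ_S(ĉ₂, c) ≤ 2 ⟪ĉ₁ - ĉ₂, w⋆ - w₁⟫`,
and Cauchy–Schwarz with `‖w⋆ - w₁‖ ≤ D(S)` finishes.
-/

section

variable {d : ℕ} {S : Set (EuclideanSpace ℝ (Fin d))}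

lemma inner_le_supp (hS : Bornology.IsBounded S) {w : EuclideanSpace ℝ (Fin d)} (hw : w ∈ S)
    (u : EuclideanSpace ℝ (Fin d)) : ⟪u, w⟫ ≤ supp S u := by
  obtain ⟨R, hR⟩ := isBounded_iff_forall_norm_le.mp hS
  refine le_csSup ⟨‖u‖ * R, ?_⟩ (Set.mem_image_of_mem _ hw)
  rintro _ ⟨v, hv, rfl⟩
  exact (real_inner_le_norm u v).trans (by gcongr; exact hR v hv)

lemma IsCompact.exists_mem_inner_eq_supp (hS : IsCompact S) (hne : S.Nonempty)
    (u : EuclideanSpace ℝ (Fin d)) : ∃ w ∈ S, ⟪u, w⟫ = supp S u :=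
  (hS.image (continuous_const.inner continuous_id)).sSup_mem (hne.image _)

lemma spoPlus_sub_spoPlus_le (hS : IsCompact S) (hne : S.Nonempty)
    {c w : EuclideanSpace ℝ (Fin d)} (hw : w ∈ S) (a b : EuclideanSpace ℝ (Fin d)) :
    spoPlus S a c w - spoPlus S b c w ≤ 2 * Metric.diam S * ‖a - b‖ := by
  obtain ⟨w₁, hw₁, hmax⟩ := hS.exists_mem_inner_eq_supp hne (c - (2 : ℝ) • a)
  have hsupp : ⟪c - (2 : ℝ) • b, w₁⟫ ≤ supp S (c - (2 : ℝ) • b) :=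
    inner_le_supp hS.isBounded hw₁ _
  have hdiam : ‖w - w₁‖ ≤ Metric.diam S := by
    simpa only [dist_eq_norm] using Metric.dist_le_diam_of_mem hS.isBounded hw hw₁
  calc spoPlus S a c w - spoPlus S b c w
      = supp S (c - (2 : ℝ) • a) - supp S (c - (2 : ℝ) • b) + 2 * ⟪a - b, w⟫ := by
        simp only [spoPlus, inner_sub_left]; ring
    _ ≤ ⟪c - (2 : ℝ) • a, w₁⟫ - ⟪c - (2 : ℝ) • b, w₁⟫ + 2 * ⟪a - b, w⟫ := by
        rw [hmax]; gcongr
    _ = 2 * ⟪a - b, w - w₁⟫ := by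
        simp only [inner_sub_left, inner_sub_right, real_inner_smul_left]; ring
    _ ≤ 2 * (‖a - b‖ * ‖w - w₁‖) := by gcongr; exact real_inner_le_norm _ _
    _ ≤ 2 * Metric.diam S * ‖a - b‖ := by
        rw [mul_assoc, mul_comm (Metric.diam S)]; gcongr

end

theorem spoPlus_lipschitz_in_prediction_general {d : ℕ}
    (S : Set (EuclideanSpace ℝ (Fin d)))
    (hne : S.Nonempty) (hcomp : IsCompact S)
    (c : EuclideanSpace ℝ (Fin d))
    (wstar : EuclideanSpace ℝ (Fin d)) (hwmem : wstar ∈ S)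
    (chat₁ chat₂ : EuclideanSpace ℝ (Fin d)) :
    |spoPlus S chat₁ c wstar - spoPlus S chat₂ c wstar| ≤
      2 * Metric.diam S * ‖chat₁ - chat₂‖ := by
  refine abs_sub_le_iff.mpr ⟨spoPlus_sub_spoPlus_le hcomp hne hwmem _ _, ?_⟩
  rw [norm_sub_rev]
  exact spoPlus_sub_spoPlus_le hcomp hne hwmem _ _

/-- **Lipschitzness of the SPO+ loss in the prediction argument.**
For a nonempty compact set `S` with diameter `D(S)`, fixed cost `c`, and a fixed
minimizer `w⋆` of `⟨c, ·⟩` over `S`,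
`|ℓ_S(ĉ₁, c) − ℓ_S(ĉ₂, c)| ≤ 2 D(S) ‖ĉ₁ − ĉ₂‖`. -/
theorem spoPlus_lipschitz_in_prediction {d : ℕ}
    (S : Set (EuclideanSpace ℝ (Fin d)))
    (hne : S.Nonempty) (hcomp : IsCompact S)
    (c : EuclideanSpace ℝ (Fin d))
    (wstar : EuclideanSpace ℝ (Fin d)) (hwmem : wstar ∈ S)
    (hwmin : ∀ w ∈ S, ⟪c, wstar⟫ ≤ ⟪c, w⟫)
    (chat₁ chat₂ : EuclideanSpace ℝ (Fin d)) :
    |spoPlus S chat₁ c wstar - spoPlus S chat₂ c wstar| ≤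
      2 * Metric.diam S * ‖chat₁ - chat₂‖ :=
  spoPlus_lipschitz_in_prediction_general S hne hcomp c wstar hwmem chat₁ chat₂
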